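/- arXiv:math/0003050 — 3 statements merged into one kernel-verified Lean document; each statement's English description precedes it below -/
import Mathlib

section
/- Let (M, N₊, N₋, D) be an associative triple over ℂ with canonical element Q ∈ N₊ ⊗ N₋ and σ_D ∈ D ⊗ D the canonical element of the restriction of B to D. Suppose S ∈ D ⊗ D satisfies the Hecke condition S₂₁ * S − σ_D * S = λ² (1 ⊗ 1) with λ ∈ ℂ, λ ≠ 0, and set R = S + Q. Then R satisfies the Hecke condition in M, i.e. R₂₁ * R − σ_M * R = λ² (1 ⊗ 1) where σ_M = σ_D + Q + Q₂₁ is the permutation element of M, if and only if σ_D * Q + Q * Q = 0 in M ⊗ M. -/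
open scoped TensorProduct

noncomputable section

variable (M : Type) [Ring M] [Algebra ℂ M]

/-- Embedding of `M ⊗ M` into the first two factors of `M ⊗ M ⊗ M`. -/
noncomputable def emb12 : (M ⊗[ℂ] M) →ₐ[ℂ] (M ⊗[ℂ] M) ⊗[ℂ] M :=
  Algebra.TensorProduct.includeLeft

/-- Embedding of `M ⊗ M` into the first and third factors of `M ⊗ M ⊗ M`. -/
noncomputable def emb13 : (M ⊗[ℂ] M) →ₐ[ℂ] (M ⊗[ℂ] M) ⊗[ℂ] M :=
  Algebra.TensorProduct.map Algebra.TensorProduct.includeLeft (AlgHom.id ℂ M)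

/-- Embedding of `M ⊗ M` into the last two factors of `M ⊗ M ⊗ M`. -/
noncomputable def emb23 : (M ⊗[ℂ] M) →ₐ[ℂ] (M ⊗[ℂ] M) ⊗[ℂ] M :=
  Algebra.TensorProduct.map Algebra.TensorProduct.includeRight (AlgHom.id ℂ M)

/-- The Yang–Baxter equation for `R ∈ M ⊗ M`. -/
def YBE (R : M ⊗[ℂ] M) : Prop :=
  emb12 M R * emb13 M R * emb23 M R = emb23 M R * emb13 M R * emb12 M R

/-- `T₂₁`: the element of `M ⊗ M` with the two tensor factors swapped. -/
noncomputable def swapT (T : M ⊗[ℂ] M) : M ⊗[ℂ] M :=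
  Algebra.TensorProduct.comm ℂ M M T

/-- `S` belongs to `D ⊗ D ⊆ M ⊗ M` for a subspace `D` of `M`. -/
def inTensor (D : Submodule ℂ M) (S : M ⊗[ℂ] M) : Prop :=
  S ∈ LinearMap.range (TensorProduct.map D.subtype D.subtype)

/-- An associative triple `(M, N₊, N₋, D)` on an algebra `M` with a
nondegenerate symmetric cyclic bilinear form `B`:  `M = N₋ + D + N₊` as a linear
space, `N₊`, `N₋` are isotropic and mutually dual, they are `D`-sub-bimodules,
`1 ∈ D`, and `D` is orthogonal to `N₊ + N₋`. -/
structure AssocTriple (B : M →ₗ[ℂ] M →ₗ[ℂ] ℂ)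
    (Np Nm D : NonUnitalSubalgebra ℂ M) : Prop where
  one_mem : (1 : M) ∈ D
  sum_top : NonUnitalSubalgebra.toSubmodule Nm ⊔ NonUnitalSubalgebra.toSubmodule D ⊔
      NonUnitalSubalgebra.toSubmodule Np = ⊤
  isoP : ∀ x ∈ Np, ∀ y ∈ Np, B x y = 0
  isoM : ∀ x ∈ Nm, ∀ y ∈ Nm, B x y = 0
  pairP : ∀ x ∈ Np, (∀ y ∈ Nm, B x y = 0) → x = 0
  pairM : ∀ y ∈ Nm, (∀ x ∈ Np, B x y = 0) → y = 0
  bimodPl : ∀ d ∈ D, ∀ x ∈ Np, d * x ∈ Np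
  bimodPr : ∀ d ∈ D, ∀ x ∈ Np, x * d ∈ Np
  bimodMl : ∀ d ∈ D, ∀ x ∈ Nm, d * x ∈ Nm
  bimodMr : ∀ d ∈ D, ∀ x ∈ Nm, x * d ∈ Nm
  orthoPl : ∀ d ∈ D, ∀ x ∈ Np, B d x = 0
  orthoPr : ∀ d ∈ D, ∀ x ∈ Np, B x d = 0
  orthoMl : ∀ d ∈ D, ∀ x ∈ Nm, B d x = 0
  orthoMr : ∀ d ∈ D, ∀ x ∈ Nm, B x d = 0

/-- A pair of `B`-dual bases `(α i)` of `N₊` and `(β i)` of `N₋`. -/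
structure DualPair (B : M →ₗ[ℂ] M →ₗ[ℂ] ℂ) (Np Nm : Submodule ℂ M)
    {ι : Type} [Fintype ι] [DecidableEq ι] (α β : ι → M) : Prop where
  memP : ∀ i, α i ∈ Np
  memM : ∀ i, β i ∈ Nm
  indepP : LinearIndependent ℂ α
  indepM : LinearIndependent ℂ β
  spanP : Submodule.span ℂ (Set.range α) = Np
  spanM : Submodule.span ℂ (Set.range β) = Nm
  dual : ∀ i k, B (α i) (β k) = if i = k then 1 else 0
/-- Proposition 4: `R = S + Q` satisfies the Hecke condition in `M` if and only
if `σ_D Q + Q² = 0`, where `σ_M = σ_D + Q + Q₂₁`. -/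
theorem stmt9
    [FiniteDimensional ℂ M]
    (B : M →ₗ[ℂ] M →ₗ[ℂ] ℂ)
    (hnd : ∀ a : M, (∀ b : M, B a b = 0) → a = 0)
    (hsymm : ∀ a b : M, B a b = B b a)
    (hcyc : ∀ a b c : M, B (a * b) c = B b (c * a))
    (Np Nm D : NonUnitalSubalgebra ℂ M)
    (hT : AssocTriple M B Np Nm D)
    -- the canonical element Q = Σ α i ⊗ β i
    (ι : Type) [Fintype ι] [DecidableEq ι] (α β : ι → M)
    (hQ : DualPair M B (NonUnitalSubalgebra.toSubmodule Np)
      (NonUnitalSubalgebra.toSubmodule Nm) α β)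
    -- the canonical element σ_D = Σ δ j ⊗ δ' j
    (κ : Type) [Fintype κ] [DecidableEq κ] (δ δ' : κ → M)
    (hD : DualPair M B (NonUnitalSubalgebra.toSubmodule D)
      (NonUnitalSubalgebra.toSubmodule D) δ δ')
    -- S ∈ D ⊗ D satisfies the Hecke condition in D ⊗ D
    (S : M ⊗[ℂ] M)
    (hS : inTensor M (NonUnitalSubalgebra.toSubmodule D) S)
    (lam : ℂ) (hlam : lam ≠ 0)
    (hHecke : swapT M S * S - (∑ j, δ j ⊗ₜ[ℂ] δ' j) * S = lam ^ 2 • (1 : M ⊗[ℂ] M))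
    -- notation
    (Q σD σM R : M ⊗[ℂ] M)
    (hQdef : Q = ∑ i, α i ⊗ₜ[ℂ] β i)
    (hσDdef : σD = ∑ j, δ j ⊗ₜ[ℂ] δ' j)
    (hσMdef : σM = σD + Q + swapT M Q)
    (hRdef : R = S + Q) :
    (swapT M R * R - σM * R = lam ^ 2 • (1 : M ⊗[ℂ] M)) ↔ σD * Q + Q * Q = 0 := by
    classical
  -- Expansion of elements of N₊ and N₋ in the dual bases
  have expandP : ∀ x, x ∈ Np → x = ∑ k, B x (β k) • α k := by
    intro x hx
    have hz : x - ∑ k, B x (β k) • α k = 0 := by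
      apply hT.pairP
      · exact sub_mem hx (sum_mem fun k _ => SMulMemClass.smul_mem _ (hQ.memP k))
      · intro y hy
        have hy' : y ∈ Submodule.span ℂ (Set.range β) := by rw [hQ.spanM]; exact hy
        clear hy
        induction hy' using Submodule.span_induction with
        | mem y hy0 =>
            obtain ⟨j, rfl⟩ := hy0
            simp [map_sub, map_sum, hQ.dual, mul_ite]
        | zero => simp
        | add a b _ _ ha hb => rw [map_add, ha, hb, add_zero]
        | smul c a _ ha => rw [map_smul, ha, smul_zero]
    exact (sub_eq_zero.mp hz)
  have expandM : ∀ y, y ∈ Nm → y = ∑ j, B (α j) y • β j := by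
    intro y hy
    have hz : y - ∑ j, B (α j) y • β j = 0 := by
      apply hT.pairM
      · exact sub_mem hy (sum_mem fun j _ => SMulMemClass.smul_mem _ (hQ.memM j))
      · intro x hx
        have hx' : x ∈ Submodule.span ℂ (Set.range α) := by rw [hQ.spanP]; exact hx
        clear hx
        induction hx' using Submodule.span_induction with
        | mem x hx0 =>
            obtain ⟨i, rfl⟩ := hx0
            simp [map_sub, map_sum, hQ.dual, mul_ite]
        | zero => simp
        | add a b _ _ ha hb => rw [map_add, LinearMap.add_apply, ha, hb, add_zero]
        | smul c a _ ha => rw [map_smul, LinearMap.smul_apply, ha, smul_zero]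
    exact (sub_eq_zero.mp hz)
  -- Expansion of pure tensors in N₊ ⊗ N₋
  have hexp : ∀ x y : M, x ∈ Np → y ∈ Nm →
      x ⊗ₜ[ℂ] y = ∑ k, ∑ j, (B x (β k) * B (α j) y) • (α k ⊗ₜ[ℂ] β j) := by
    intro x y hx hy
    conv_lhs => rw [expandP x hx, expandM y hy]
    rw [TensorProduct.sum_tmul]
    refine Finset.sum_congr rfl fun k _ => ?_
    rw [TensorProduct.tmul_sum]
    refine Finset.sum_congr rfl fun j _ => ?_
    rw [TensorProduct.smul_tmul, TensorProduct.tmul_smul, TensorProduct.tmul_smul,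
      smul_smul, mul_comm]
  -- the key scalar identity
  have hscal : ∀ d, d ∈ D → ∀ e, e ∈ D → ∀ k j,
      (∑ i, B (e * α i) (β k) * B (α j) (d * β i)) =
      ∑ i, B (α i * d) (β k) * B (α j) (β i * e) := by
    intro d hd e he k j
    have h1 : ∀ i, B (e * α i) (β k) * B (α j) (d * β i)
        = B (α j * d) (β i) * B (α i) (β k * e) := by
      intro i
      rw [hcyc e (α i) (β k), hsymm (α j) (d * β i), hcyc d (β i) (α j),
        hsymm (β i) (α j * d)]
      ring
    have h2 : ∀ i, B (α i * d) (β k) * B (α j) (β i * e)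
        = B (e * α j) (β i) * B (α i * d) (β k) := by
      intro i
      rw [hcyc e (α j) (β i)]
      ring
    have hke : β k * e = ∑ i, B (α i) (β k * e) • β i :=
      expandM _ (hT.bimodMr e he _ (hQ.memM k))
    have hLsum : (∑ i, B (α j * d) (β i) * B (α i) (β k * e))
        = B (α j * d) (β k * e) := by
      conv_rhs => rw [hke]
      rw [map_sum]
      refine Finset.sum_congr rfl fun i _ => ?_
      rw [map_smul, smul_eq_mul, mul_comm]
    have hje : e * α j = ∑ i, B (e * α j) (β i) • α i :=
      expandP _ (hT.bimodPl e he _ (hQ.memP j))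
    have hRsum : (∑ i, B (e * α j) (β i) * B (α i * d) (β k))
        = B ((e * α j) * d) (β k) := by
      conv_rhs => rw [hje]
      rw [Finset.sum_mul]
      have : (∑ i, (B (e * α j) (β i) • α i) * d)
          = ∑ i, B (e * α j) (β i) • (α i * d) := by
        refine Finset.sum_congr rfl fun i _ => ?_
        rw [smul_mul_assoc]
      rw [this, map_sum, LinearMap.sum_apply]
      refine Finset.sum_congr rfl fun i _ => ?_
      rw [map_smul, LinearMap.smul_apply, smul_eq_mul]
    have hconn : B (α j * d) (β k * e) = B ((e * α j) * d) (β k) := by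
      rw [mul_assoc, hcyc e (α j * d) (β k)]
    calc (∑ i, B (e * α i) (β k) * B (α j) (d * β i))
        = ∑ i, B (α j * d) (β i) * B (α i) (β k * e) :=
          Finset.sum_congr rfl fun i _ => h1 i
      _ = B (α j * d) (β k * e) := hLsum
      _ = B ((e * α j) * d) (β k) := hconn
      _ = ∑ i, B (e * α j) (β i) * B (α i * d) (β k) := hRsum.symm
      _ = ∑ i, B (α i * d) (β k) * B (α j) (β i * e) :=
          Finset.sum_congr rfl fun i _ => (h2 i).symm
  -- key tensor identity: (e ⊗ d) Q = Q (d ⊗ e) for d, e ∈ D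
  have hkey : ∀ d, d ∈ D → ∀ e, e ∈ D →
      (e ⊗ₜ[ℂ] d) * Q = Q * (d ⊗ₜ[ℂ] e) := by
    intro d hd e he
    rw [hQdef, Finset.mul_sum, Finset.sum_mul]
    simp only [Algebra.TensorProduct.tmul_mul_tmul]
    have hL : ∀ i, (e * α i) ⊗ₜ[ℂ] (d * β i)
        = ∑ k, ∑ j, (B (e * α i) (β k) * B (α j) (d * β i)) • (α k ⊗ₜ[ℂ] β j) :=
      fun i => hexp _ _ (hT.bimodPl e he _ (hQ.memP i)) (hT.bimodMl d hd _ (hQ.memM i))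
    have hR : ∀ i, (α i * d) ⊗ₜ[ℂ] (β i * e)
        = ∑ k, ∑ j, (B (α i * d) (β k) * B (α j) (β i * e)) • (α k ⊗ₜ[ℂ] β j) :=
      fun i => hexp _ _ (hT.bimodPr d hd _ (hQ.memP i)) (hT.bimodMr e he _ (hQ.memM i))
    rw [Finset.sum_congr rfl fun i _ => hL i, Finset.sum_congr rfl fun i _ => hR i,
      Finset.sum_comm]
    conv_rhs => rw [Finset.sum_comm]
    refine Finset.sum_congr rfl fun k _ => ?_
    rw [Finset.sum_comm]
    conv_rhs => rw [Finset.sum_comm]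
    refine Finset.sum_congr rfl fun j _ => ?_
    rw [← Finset.sum_smul, ← Finset.sum_smul, hscal d hd e he k j]
  -- additivity of swapT
  have hswapadd : ∀ u v : M ⊗[ℂ] M, swapT M (u + v) = swapT M u + swapT M v := by
    intro u v; simp only [swapT, map_add]
  -- S₂₁ Q = Q S
  have hSQ : ∀ T : M ⊗[ℂ] M,
      inTensor M (NonUnitalSubalgebra.toSubmodule D) T → swapT M T * Q = Q * T := by
    intro T hT'
    obtain ⟨T₀, rfl⟩ := hT'
    induction T₀ using TensorProduct.induction_on with
    | zero => simp [swapT]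
    | tmul x y =>
        simp only [TensorProduct.map_tmul, Submodule.coe_subtype]
        have hsw : swapT M ((x : M) ⊗ₜ[ℂ] (y : M)) = (y : M) ⊗ₜ[ℂ] (x : M) := by
          simp [swapT]
        rw [hsw]
        exact hkey (x : M) x.2 (y : M) y.2
    | add a b ha hb =>
        rw [map_add, hswapadd, add_mul, mul_add, ha, hb]
  have hSQ' : swapT M S * Q = Q * S := hSQ S hS
  rw [← hσDdef] at hHecke
  have hmain : swapT M R * R - σM * R
      = lam ^ 2 • (1 : M ⊗[ℂ] M) - (σD * Q + Q * Q) := by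
    rw [hRdef, hσMdef, ← hHecke, hswapadd]
    simp only [add_mul, mul_add]
    rw [hSQ']
    abel
  rw [hmain, sub_eq_self]
end
end

section
/- Let n ≥ 1 and let σ be a permutation of {1, ..., n}. Then the element Q = Σ_{i=1}^n E_{σ(i),i} ⊗ E_{i,σ(i)} of Mat_n(ℂ) ⊗ Mat_n(ℂ) satisfies the Yang–Baxter equation Q₁₂ * Q₁₃ * Q₂₃ = Q₂₃ * Q₁₃ * Q₁₂ in Mat_n(ℂ)^{⊗3}. -/
/-!
Writing `Q = ∑ᵢ xᵢ ⊗ yᵢ`, both sides of the Yang–Baxter equation expand into triple sums of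
elementary tensors of products of matrix units. Since `E a b * E c d = δ_{bc} E a d`, each triple
sum collapses to a single sum, and both sides equal
`∑ⱼ E_{σ²j, j} ⊗ E_{σj, σj} ⊗ E_{j, σ²j}`.
-/

open scoped TensorProduct

noncomputable section

variable (M : Type) [Ring M] [Algebra ℂ M]

/-- The matrix units `E i j`. -/
noncomputable def E (n : ℕ) (i j : Fin n) : Matrix (Fin n) (Fin n) ℂ :=
  Matrix.single i j 1

lemma E_mul_E (n : ℕ) (a b c d : Fin n) :
    E n a b * E n c d = if b = c then E n a d else 0 := by
  split_ifs with h
  · subst h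
    simp [E]
  · exact Matrix.single_mul_single_of_ne (1 : ℂ) a b c h 1

@[simp] lemma emb12_tmul (a b : M) : emb12 M (a ⊗ₜ b) = (a ⊗ₜ b) ⊗ₜ 1 := rfl

@[simp] lemma emb13_tmul (a b : M) : emb13 M (a ⊗ₜ b) = (a ⊗ₜ 1) ⊗ₜ b := rfl

@[simp] lemma emb23_tmul (a b : M) : emb23 M (a ⊗ₜ b) = (1 ⊗ₜ a) ⊗ₜ b := rfl

section SumTmul

variable {ι : Type*} [Fintype ι] (x y : ι → M)

lemma emb12_mul_emb13_mul_emb23_sum_tmul :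
    emb12 M (∑ i, x i ⊗ₜ y i) * emb13 M (∑ i, x i ⊗ₜ y i) * emb23 M (∑ i, x i ⊗ₜ y i) =
      ∑ k, ∑ j, ∑ i, (x i * x j) ⊗ₜ (y i * x k) ⊗ₜ (y j * y k) := by
  simp only [map_sum, emb12_tmul, emb13_tmul, emb23_tmul, Finset.sum_mul, Finset.mul_sum,
    Algebra.TensorProduct.tmul_mul_tmul, mul_one, one_mul]

lemma emb23_mul_emb13_mul_emb12_sum_tmul :
    emb23 M (∑ i, x i ⊗ₜ y i) * emb13 M (∑ i, x i ⊗ₜ y i) * emb12 M (∑ i, x i ⊗ₜ y i) =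
      ∑ i, ∑ j, ∑ k, (x j * x i) ⊗ₜ (x k * y i) ⊗ₜ (y k * y j) := by
  simp only [map_sum, emb12_tmul, emb13_tmul, emb23_tmul, Finset.sum_mul, Finset.mul_sum,
    Algebra.TensorProduct.tmul_mul_tmul, mul_one, one_mul]

end SumTmul

section Perm

variable (n : ℕ) (σ : Equiv.Perm (Fin n))

-- Only the terms with `i = k = σ j` of the expansion survive.
lemma emb12_mul_emb13_mul_emb23_perm :
    let Q := ∑ i, E n (σ i) i ⊗ₜ[ℂ] E n i (σ i)
    emb12 _ Q * emb13 _ Q * emb23 _ Q =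
      ∑ j, E n (σ (σ j)) j ⊗ₜ[ℂ] E n (σ j) (σ j) ⊗ₜ[ℂ] E n j (σ (σ j)) := by
  simp only [emb12_mul_emb13_mul_emb23_sum_tmul, E_mul_E, TensorProduct.ite_tmul,
    TensorProduct.tmul_ite, Equiv.apply_eq_iff_eq]
  rw [Finset.sum_comm]
  simp [Finset.sum_ite_irrel]

-- Only the terms with `k = i` and `j = σ i` of the expansion survive.
lemma emb23_mul_emb13_mul_emb12_perm :
    let Q := ∑ i, E n (σ i) i ⊗ₜ[ℂ] E n i (σ i)
    emb23 _ Q * emb13 _ Q * emb12 _ Q =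
      ∑ j, E n (σ (σ j)) j ⊗ₜ[ℂ] E n (σ j) (σ j) ⊗ₜ[ℂ] E n j (σ (σ j)) := by
  simp only [emb23_mul_emb13_mul_emb12_sum_tmul, E_mul_E, TensorProduct.ite_tmul,
    TensorProduct.tmul_ite]
  refine Finset.sum_congr rfl fun i _ => ?_
  rw [Finset.sum_comm]
  simp

end Perm

theorem stmt13_general (n : ℕ) (σ : Equiv.Perm (Fin n)) :
    YBE (Matrix (Fin n) (Fin n) ℂ)
      (∑ i, E n (σ i) i ⊗ₜ[ℂ] E n i (σ i)) :=
  (emb12_mul_emb13_mul_emb23_perm n σ).trans (emb23_mul_emb13_mul_emb12_perm n σ).symm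

/-- For any permutation `σ` of `{1,…,n}`, the element
`Q = Σᵢ E_{σ(i),i} ⊗ E_{i,σ(i)}` satisfies the Yang–Baxter equation. -/
theorem stmt13 (n : ℕ) (hn : 1 ≤ n) (σ : Equiv.Perm (Fin n)) :
    YBE (Matrix (Fin n) (Fin n) ℂ)
      (∑ i, E n (σ i) i ⊗ₜ[ℂ] E n i (σ i)) :=
  stmt13_general n σ
end
end

section
/- Let n ≥ 1, let q ∈ ℂ with q ≠ 0 and q² ≠ 1, and set ω = q − q⁻¹. Suppose for each i ∈ {1,...,n} we choose a(i,i) ∈ {q/ω, −q⁻¹/ω}, and for i ≠ k we set a(i,k) = b(i,k)/ω where b(i,k) ∈ ℂ satisfy b(i,k)·b(k,i) = 1. Then S = Σ_{i,k} a(i,k) E_{ii} ⊗ E_{kk} satisfies the Hecke condition S₂₁ * S − σ_D * S = λ² (1 ⊗ 1) with λ = 1/ω, where σ_D = Σ_i E_{ii} ⊗ E_{ii}. -/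
open scoped TensorProduct

noncomputable section

variable (M : Type) [Ring M] [Algebra ℂ M]

/-! The four elements in the Hecke condition all lie in the commutative subalgebra spanned by
the `E_ii ⊗ E_kk`, where `Σ c(i,k) E_ii ⊗ E_kk` multiply entrywise in `c`, the flip transposes
`c`, `σ_D` has the Kronecker delta as coefficients and `1 ⊗ 1` the constant `1`. The condition
thus reduces to `a(k,i) a(i,k) - δ_ik a(i,k) = ω⁻²` for all `i, k`: off the diagonal this is
`b(i,k) b(k,i) = 1`, on it this says that `a(i,i)` is a root of `x² - x - ω⁻²`, whose roots
are `q/ω` and `-q⁻¹/ω`. -/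

section DiagTensor

variable {n : ℕ}

def diagTensor (n : ℕ) (c : Fin n → Fin n → ℂ) :
    Matrix (Fin n) (Fin n) ℂ ⊗[ℂ] Matrix (Fin n) (Fin n) ℂ :=
  ∑ i, ∑ k, c i k • (E n i i ⊗ₜ[ℂ] E n k k)

lemma E_diag_mul_E_diag (i k : Fin n) :
    E n i i * E n k k = if i = k then E n i i else 0 := by
  split_ifs with h
  · subst h
    simp [E]
  · simp [E, h]

lemma diagTensor_mul (c d : Fin n → Fin n → ℂ) :
    diagTensor n c * diagTensor n d = diagTensor n (c * d) := by
  simp only [diagTensor, Finset.sum_mul, Finset.mul_sum, smul_mul_smul_comm,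
    Algebra.TensorProduct.tmul_mul_tmul, E_diag_mul_E_diag]
  simp [TensorProduct.ite_tmul, TensorProduct.tmul_ite, smul_ite]

lemma diagTensor_sub (c d : Fin n → Fin n → ℂ) :
    diagTensor n (c - d) = diagTensor n c - diagTensor n d := by
  simp only [diagTensor, Pi.sub_apply, ← Finset.sum_sub_distrib]
  exact Finset.sum_congr rfl fun i _ => Finset.sum_congr rfl fun k _ =>
    sub_smul (c i k) (d i k) (E n i i ⊗ₜ[ℂ] E n k k)

lemma swapT_diagTensor (c : Fin n → Fin n → ℂ) :
    swapT _ (diagTensor n c) = diagTensor n (Function.swap c) := by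
  simp only [swapT, diagTensor, map_sum, map_smul, Algebra.TensorProduct.comm_tmul]
  exact Finset.sum_comm

lemma sum_E_tmul_E_eq_diagTensor :
    ∑ i, E n i i ⊗ₜ[ℂ] E n i i = diagTensor n (fun i k => if i = k then 1 else 0) := by
  simp [diagTensor, ite_smul]

lemma diagTensor_const (r : ℂ) : diagTensor n (fun _ _ => r) = r • 1 := by
  simp only [diagTensor, ← Finset.smul_sum, ← TensorProduct.tmul_sum, ← TensorProduct.sum_tmul]
  rw [Algebra.TensorProduct.one_def]
  simp only [E, Matrix.sum_single_one]

end DiagTensor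

section HeckeCoefficients

variable {q ω : ℂ}

lemma sq_sub_self_of_eq_div_or_eq_neg_inv_div {x : ℂ} (hω : ω = q - q⁻¹)
    (hx : x = q / ω ∨ x = -q⁻¹ / ω) : x ^ 2 - x = (1 / ω) ^ 2 := by
  rcases eq_or_ne ω 0 with rfl | hω0
  · -- both sides vanish, as `x / 0 = 0`
    rcases hx with rfl | rfl <;> simp
  have hq : q ≠ 0 := by
    rintro rfl
    simp [hω] at hω0
  subst hω
  rcases hx with rfl | rfl <;> field_simp <;> ring

lemma div_mul_div_of_mul_eq_one {b b' : ℂ} (h : b * b' = 1) :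
    b' / ω * (b / ω) = (1 / ω) ^ 2 := by
  rw [div_mul_div_comm, mul_comm, h, one_div_pow, sq]

end HeckeCoefficients

theorem stmt15_general (n : ℕ) (q : ℂ)
    (ω : ℂ) (hω : ω = q - q⁻¹)
    (a b : Fin n → Fin n → ℂ)
    (haii : ∀ i, a i i = q / ω ∨ a i i = -q⁻¹ / ω)
    (hab : ∀ i k, i ≠ k → a i k = b i k / ω)
    (hb : ∀ i k, i ≠ k → b i k * b k i = 1) :
    swapT _ (∑ i, ∑ k, a i k • (E n i i ⊗ₜ[ℂ] E n k k))
        * (∑ i, ∑ k, a i k • (E n i i ⊗ₜ[ℂ] E n k k))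
      - (∑ i, E n i i ⊗ₜ[ℂ] E n i i)
        * (∑ i, ∑ k, a i k • (E n i i ⊗ₜ[ℂ] E n k k))
      = (1 / ω) ^ 2 • (1 : Matrix (Fin n) (Fin n) ℂ ⊗[ℂ] Matrix (Fin n) (Fin n) ℂ) := by
  have coefficients : Function.swap a * a - (fun i k => if i = k then 1 else 0) * a =
      fun _ _ => (1 / ω) ^ 2 := by
    funext i k
    simp only [Pi.sub_apply, Pi.mul_apply, Function.swap]
    split_ifs with h
    · subst h
      rw [one_mul, ← sq]
      exact sq_sub_self_of_eq_div_or_eq_neg_inv_div hω (haii i)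
    · rw [zero_mul, sub_zero, hab i k h, hab k i (Ne.symm h)]
      exact div_mul_div_of_mul_eq_one (hb i k h)
  rw [← diagTensor, swapT_diagTensor, sum_E_tmul_E_eq_diagTensor, diagTensor_mul, diagTensor_mul,
    ← diagTensor_sub, coefficients, diagTensor_const]

/-- The principal solution of the Hecke condition in the diagonal subalgebra:
with `a(i,i) ∈ {q/ω, −q⁻¹/ω}` and `a(i,k) = b(i,k)/ω`, `b(i,k) b(k,i) = 1` for
`i ≠ k`, the element `S = Σ a(i,k) E_{ii} ⊗ E_{kk}` satisfies
`S₂₁ S − σ_D S = (1/ω)² (1 ⊗ 1)`. -/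
theorem stmt15 (n : ℕ) (hn : 1 ≤ n) (q : ℂ) (hq : q ≠ 0) (hq2 : q ^ 2 ≠ 1)
    (ω : ℂ) (hω : ω = q - q⁻¹)
    (a b : Fin n → Fin n → ℂ)
    (haii : ∀ i, a i i = q / ω ∨ a i i = -q⁻¹ / ω)
    (hab : ∀ i k, i ≠ k → a i k = b i k / ω)
    (hb : ∀ i k, i ≠ k → b i k * b k i = 1) :
    swapT _ (∑ i, ∑ k, a i k • (E n i i ⊗ₜ[ℂ] E n k k))
        * (∑ i, ∑ k, a i k • (E n i i ⊗ₜ[ℂ] E n k k))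
      - (∑ i, E n i i ⊗ₜ[ℂ] E n i i)
        * (∑ i, ∑ k, a i k • (E n i i ⊗ₜ[ℂ] E n k k))
      = (1 / ω) ^ 2 • (1 : Matrix (Fin n) (Fin n) ℂ ⊗[ℂ] Matrix (Fin n) (Fin n) ℂ) :=
  stmt15_general n q ω hω a b haii hab hb
end
end
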